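/- Let A_τ ∈ ℝⁿˣⁿ, B_τ ∈ ℝⁿˣᵐ, τ ≥ 0, x ∈ ℝⁿ, u ∈ ℝᵐ, ω ∈ ℝ, d ∈ ℝⁿ, and let Δ : ℝⁿ → ℝⁿ satisfy |Δᵢ(x)| ≤ ηᵢ·‖x‖ with ηᵢ ≥ 0. Let χ, χ⁺ ∈ ℝⁿˣⁿ be diagonal matrices with diagonal entries bounded as |χᵢ| ≤ χ̄ᵢ and |χ⁺ᵢ| ≤ χ̄ᵢ, where 0 ≤ χ̄ᵢ < 1. Let ε, ε⁺ ∈ ℝⁿ with |εᵢ| ≤ ε̄ᵢ, |ε⁺ᵢ| ≤ ε̄ᵢ, and |dᵢ| ≤ d̄ᵢ for nonnegative vectors ε̄, d̄. Define x⁺ = A_τ x + τ·Δ(x) + (1−ω)·B_τ u + d, y = (I+χ)x + ε, and y⁺ = (I+χ⁺)x⁺ + ε⁺. Then componentwise, for each i: |y⁺ − (A_τ x + B_τ u + χ⁺ A_τ x + (χ⁺ − ω(I+χ⁺)) B_τ u)|ᵢ ≤ (1+χ̄ᵢ)·τ·ηᵢ·(maxⱼ 1/(1−χ̄ⱼ))·(‖y‖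 + ‖ε̄‖) + (1+χ̄ᵢ)·d̄ᵢ + ε̄ᵢ. -/
import Mathlib


/-- The Euclidean (ℓ²) norm of a vector in `Fin n → ℝ`. -/
noncomputable def euclNorm {n : ℕ} (x : Fin n → ℝ) : ℝ :=
  ‖(WithLp.equiv 2 (Fin n → ℝ)).symm x‖

lemma euclNorm_eq {n : ℕ} (x : Fin n → ℝ) :
    euclNorm x = Real.sqrt (∑ i, (x i) ^ 2) := by
  rw [euclNorm, EuclideanSpace.norm_eq]
  simp [sq_abs]

lemma euclNorm_nonneg {n : ℕ} (x : Fin n → ℝ) : 0 ≤ euclNorm x :=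
  norm_nonneg _

lemma euclNorm_mono {n : ℕ} {a b : Fin n → ℝ} (h : ∀ i, |a i| ≤ b i) :
    euclNorm a ≤ euclNorm b := by
  rw [euclNorm_eq, euclNorm_eq]
  apply Real.sqrt_le_sqrt
  apply Finset.sum_le_sum
  intro i _
  have := h i
  have hb : 0 ≤ b i := le_trans (abs_nonneg _) this
  calc (a i) ^ 2 = |a i| ^ 2 := (sq_abs _).symm
    _ ≤ (b i) ^ 2 := by nlinarith [abs_nonneg (a i)]

lemma euclNorm_smul {n : ℕ} (c : ℝ) (a : Fin n → ℝ) :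
    euclNorm (fun i => c * a i) = |c| * euclNorm a := by
  rw [euclNorm_eq, euclNorm_eq]
  rw [show (∑ i, (c * a i) ^ 2) = c ^ 2 * ∑ i, (a i) ^ 2 by
    rw [Finset.mul_sum]; exact Finset.sum_congr rfl fun i _ => by ring]
  rw [Real.sqrt_mul (sq_nonneg c), Real.sqrt_sq_eq_abs]

lemma euclNorm_add_le {n : ℕ} (a b : Fin n → ℝ) :
    euclNorm (a + b) ≤ euclNorm a + euclNorm b := by
  have : (WithLp.equiv 2 (Fin n → ℝ)).symm (a + b)
      = (WithLp.equiv 2 (Fin n → ℝ)).symm a + (WithLp.equiv 2 (Fin n → ℝ)).symm b := rfl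
  rw [euclNorm, this]
  exact norm_add_le _ _

lemma euclNorm_abs {n : ℕ} (a : Fin n → ℝ) :
    euclNorm (fun i => |a i|) = euclNorm a := by
  rw [euclNorm_eq, euclNorm_eq]
  simp [sq_abs]

/-- **Componentwise additive-uncertainty bound `δ̂` expressed via the measurement `y`.**
For the attacked dynamics `x⁺ = A_τ x + τ Δ(x) + (1-ω) B_τ u + d` with measurements
`y = (I+χ) x + ε`, `y⁺ = (I+χ⁺) x⁺ + ε⁺` (`χ, χ⁺` diagonal, componentwise bounded by
`χ̄` with entries `< 1`), the residual after removing the nominal and parametric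
terms is bounded componentwise by
`(1+χ̄ᵢ) τ ηᵢ (maxⱼ (1-χ̄ⱼ)⁻¹)(‖y‖+‖ε̄‖) + (1+χ̄ᵢ) d̄ᵢ + ε̄ᵢ`. -/
theorem stmt_4 (n m : ℕ)
    (Aτ : Matrix (Fin n) (Fin n) ℝ) (Bτ : Matrix (Fin n) (Fin m) ℝ)
    (τ : ℝ) (hτ : 0 ≤ τ)
    (x : Fin n → ℝ) (u : Fin m → ℝ) (ω : ℝ) (d : Fin n → ℝ)
    (Δ : (Fin n → ℝ) → (Fin n → ℝ)) (η : Fin n → ℝ)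
    (hη : ∀ i, 0 ≤ η i) (hΔ : ∀ i, |Δ x i| ≤ η i * euclNorm x)
    (χ χp χbar : Fin n → ℝ)
    (hχbar : ∀ i, 0 ≤ χbar i ∧ χbar i < 1)
    (hχ : ∀ i, |χ i| ≤ χbar i) (hχp : ∀ i, |χp i| ≤ χbar i)
    (ε εp εbar dbar : Fin n → ℝ)
    (hεbar : ∀ i, 0 ≤ εbar i) (hdbar : ∀ i, 0 ≤ dbar i)
    (hε : ∀ i, |ε i| ≤ εbar i) (hεp : ∀ i, |εp i| ≤ εbar i)
    (hd : ∀ i, |d i| ≤ dbar i)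
    (xp y yp : Fin n → ℝ)
    (hxp : xp = Aτ.mulVec x + τ • Δ x + (1 - ω) • Bτ.mulVec u + d)
    (hy : y = (1 + Matrix.diagonal χ).mulVec x + ε)
    (hyp : yp = (1 + Matrix.diagonal χp).mulVec xp + εp) :
    ∀ i, |(yp - (Aτ.mulVec x + Bτ.mulVec u
            + (Matrix.diagonal χp * Aτ).mulVec x
            + ((Matrix.diagonal χp - ω • (1 + Matrix.diagonal χp)) * Bτ).mulVec u)) i|
      ≤ (1 + χbar i) * τ * η i * (⨆ j, (1 - χbar j)⁻¹) * (euclNorm y + euclNorm εbar)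
        + (1 + χbar i) * dbar i + εbar i := by
  intro i
  have hne : Nonempty (Fin n) := ⟨i⟩
  set M := ⨆ j, (1 - χbar j)⁻¹ with hM
  have hbdd : BddAbove (Set.range fun j => (1 - χbar j)⁻¹) :=
    Set.Finite.bddAbove (Set.finite_range _)
  have hMj : ∀ j, (1 - χbar j)⁻¹ ≤ M := fun j => le_ciSup hbdd j
  have hpos : ∀ j, (0:ℝ) < 1 - χbar j := fun j => by linarith [(hχbar j).2]
  have hMpos : 0 < M := lt_of_lt_of_le (inv_pos.mpr (hpos i)) (hMj i)
  -- residual identity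
  have hres : (yp - (Aτ.mulVec x + Bτ.mulVec u
            + (Matrix.diagonal χp * Aτ).mulVec x
            + ((Matrix.diagonal χp - ω • (1 + Matrix.diagonal χp)) * Bτ).mulVec u)) i
      = (1 + χp i) * (τ * Δ x i + d i) + εp i := by
    subst hxp hyp
    simp only [Pi.sub_apply, Pi.add_apply, Matrix.add_mulVec, Matrix.one_mulVec,
      ← Matrix.mulVec_mulVec, Matrix.sub_mulVec, Matrix.smul_mulVec,
      Matrix.mulVec_diagonal, Matrix.mulVec_add, Matrix.mulVec_smul,
      Pi.smul_apply, smul_eq_mul]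
    ring
  rw [hres]
  -- pointwise bound on x
  have hxbnd : ∀ j, |x j| ≤ M * (|y j| + εbar j) := by
    intro j
    have hyj : y j = (1 + χ j) * x j + ε j := by
      subst hy
      simp [Matrix.add_mulVec, Matrix.one_mulVec, Matrix.mulVec_diagonal]
      ring
    have h1 : 1 - χbar j ≤ 1 + χ j := by
      have := abs_le.mp (le_trans (le_refl _) (hχ j))
      linarith [this.1]
    have h2 : |(1 + χ j) * x j| ≤ |y j| + εbar j := by
      have : (1 + χ j) * x j = y j - ε j := by rw [hyj]; ring
      rw [this]
      calc |y j - ε j| ≤ |y j| + |ε j| := abs_sub _ _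
        _ ≤ |y j| + εbar j := by linarith [hε j]
    have h3 : (1 - χbar j) * |x j| ≤ |y j| + εbar j := by
      calc (1 - χbar j) * |x j| ≤ (1 + χ j) * |x j| := by
            apply mul_le_mul_of_nonneg_right h1 (abs_nonneg _)
        _ = |(1 + χ j) * x j| := by
            rw [abs_mul, abs_of_pos (lt_of_lt_of_le (hpos j) h1)]
        _ ≤ |y j| + εbar j := h2
    have h4 : |x j| ≤ (1 - χbar j)⁻¹ * (|y j| + εbar j) := by
      rw [inv_mul_eq_div, le_div_iff₀ (hpos j), mul_comm]
      exact h3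
    calc |x j| ≤ (1 - χbar j)⁻¹ * (|y j| + εbar j) := h4
      _ ≤ M * (|y j| + εbar j) := by
          apply mul_le_mul_of_nonneg_right (hMj j)
          have := abs_nonneg (y j); have := hεbar j; linarith
  -- norm bound on x
  have hxnorm : euclNorm x ≤ M * (euclNorm y + euclNorm εbar) := by
    calc euclNorm x ≤ euclNorm (fun j => M * (|y j| + εbar j)) := by
          apply euclNorm_mono
          intro j; exact hxbnd j
      _ = |M| * euclNorm (fun j => |y j| + εbar j) := euclNorm_smul M _
      _ = M * euclNorm ((fun j => |y j|) + εbar) := by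
          rw [abs_of_pos hMpos]; rfl
      _ ≤ M * (euclNorm (fun j => |y j|) + euclNorm εbar) := by
          apply mul_le_mul_of_nonneg_left (euclNorm_add_le _ _) hMpos.le
      _ = M * (euclNorm y + euclNorm εbar) := by rw [euclNorm_abs]
  -- assemble
  have hχpi : |1 + χp i| ≤ 1 + χbar i := by
    have := abs_le.mp (hχp i)
    rw [abs_le]; constructor <;> linarith [(hχbar i).1]
  have hΔbnd : |τ * Δ x i + d i| ≤ τ * η i * (M * (euclNorm y + euclNorm εbar)) + dbar i := by
    calc |τ * Δ x i + d i| ≤ |τ * Δ x i| + |d i| := abs_add_le _ _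
      _ ≤ τ * (η i * euclNorm x) + dbar i := by
          rw [abs_mul, abs_of_nonneg hτ]
          have h1 : |Δ x i| ≤ η i * euclNorm x := hΔ i
          have h2 := mul_le_mul_of_nonneg_left h1 hτ
          linarith [hd i]
      _ ≤ τ * η i * (M * (euclNorm y + euclNorm εbar)) + dbar i := by
          have h1 := mul_le_mul_of_nonneg_left hxnorm (mul_nonneg hτ (hη i))
          have : τ * (η i * euclNorm x) = τ * η i * euclNorm x := by ring
          rw [this]
          linarith [mul_le_mul_of_nonneg_left hxnorm (mul_nonneg hτ (hη i))]
  have hpre : |(1 + χp i) * (τ * Δ x i + d i) + εp i|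
      ≤ (1 + χbar i) * (τ * η i * (M * (euclNorm y + euclNorm εbar)) + dbar i) + εbar i := by
    calc |(1 + χp i) * (τ * Δ x i + d i) + εp i|
        ≤ |(1 + χp i) * (τ * Δ x i + d i)| + |εp i| := abs_add_le _ _
      _ = |1 + χp i| * |τ * Δ x i + d i| + |εp i| := by rw [abs_mul]
      _ ≤ (1 + χbar i) * (τ * η i * (M * (euclNorm y + euclNorm εbar)) + dbar i) + εbar i := by
          have h1 : |1 + χp i| * |τ * Δ x i + d i|
              ≤ (1 + χbar i) * (τ * η i * (M * (euclNorm y + euclNorm εbar)) + dbar i) := by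
            apply mul_le_mul hχpi hΔbnd (abs_nonneg _)
            linarith [(hχbar i).1]
          linarith [hεp i]
  calc |(1 + χp i) * (τ * Δ x i + d i) + εp i|
      ≤ (1 + χbar i) * (τ * η i * (M * (euclNorm y + euclNorm εbar)) + dbar i) + εbar i := hpre
    _ = (1 + χbar i) * τ * η i * M * (euclNorm y + euclNorm εbar)
        + (1 + χbar i) * dbar i + εbar i := by ring
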